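/- Let F be a finite field of odd characteristic with q = |F| elements, let A be a finite-dimensional associative (not necessarily unital) F-algebra in which every element is nilpotent, and let σ : A → A be an F-linear anti-involution, i.e. σ(x·y) = σ(y)·σ(x) for all x, y ∈ A and σ ∘ σ = id. Then the set Sp(A, σ) := {x ∈ A : x + σ(x) + x·σ(x) = 0} has cardinality exactly q^d, where d = dim_F {a ∈ A : σ(a) = −a}. -/
import Mathlib
set_option linter.unusedSectionVars false


/-- Powers in a non-unital ring: `nupow a k = a^(k+1)`. -/
def nupow {A : Type*} [NonUnitalRing A] (a : A) : ℕ → A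
  | 0 => a
  | k + 1 => a * nupow a k

section Aux

variable {F : Type*} [Field F] {A : Type*} [NonUnitalRing A] [Module F A]
  [IsScalarTower F A A] [SMulCommClass F A A]

lemma inr_nupow (a : A) (k : ℕ) :
    ((a : Unitization F A)) ^ (k + 1) = ((nupow a k : A) : Unitization F A) := by
  induction k with
  | zero => simp [nupow]
  | succ k ih =>
      rw [pow_succ']  -- a ^ (k+2) = a * a ^ (k+1)
      rw [ih, nupow, Unitization.inr_mul]

lemma isNilpotent_inr {a : A} (h : ∃ k : ℕ, nupow a k = 0) :
    IsNilpotent ((a : Unitization F A)) := by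
  obtain ⟨k, hk⟩ := h
  exact ⟨k + 1, by rw [inr_nupow, hk, Unitization.inr_zero]⟩

/-- Extension of the anti-involution to the unitization. -/
noncomputable def tauMap (σ : A →ₗ[F] A) : Unitization F A → Unitization F A :=
  fun b => Unitization.inl b.fst + (↑(σ b.snd) : Unitization F A)

variable (σ : A →ₗ[F] A)

@[simp] lemma tauMap_fst (b : Unitization F A) : (tauMap σ b).fst = b.fst := by
  simp [tauMap]

@[simp] lemma tauMap_snd (b : Unitization F A) : (tauMap σ b).snd = σ b.snd := by
  simp [tauMap]

lemma tauMap_add (b c : Unitization F A) : tauMap σ (b + c) = tauMap σ b + tauMap σ c := by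
  refine Unitization.ext (by simp) (by simp)

lemma tauMap_neg (b : Unitization F A) : tauMap σ (-b) = -(tauMap σ b) := by
  refine Unitization.ext (by simp) (by simp)

lemma tauMap_one : tauMap σ (1 : Unitization F A) = 1 := by
  refine Unitization.ext (by simp) (by simp)

lemma tauMap_inr (a : A) : tauMap σ (a : Unitization F A) = ((σ a : A) : Unitization F A) := by
  refine Unitization.ext (by simp) (by simp)

lemma tauMap_mul (hanti : ∀ x y : A, σ (x * y) = σ y * σ x) (b c : Unitization F A) :
    tauMap σ (b * c) = tauMap σ c * tauMap σ b := by
  refine Unitization.ext (by simp [Unitization.fst_mul, mul_comm]) ?_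
  simp only [tauMap_snd, tauMap_fst, Unitization.snd_mul, map_add, map_smul, hanti]
  abel

lemma tauMap_two : tauMap σ (2 : Unitization F A) = 2 := by
  have h : (2 : Unitization F A) = 1 + 1 := by norm_num
  rw [h, tauMap_add, tauMap_one]

/-- `tauMap` of the inverse of a unit. -/
lemma tauMap_coe_inv (hanti : ∀ x y : A, σ (x * y) = σ y * σ x)
    (u u' : (Unitization F A)ˣ) (h : tauMap σ (↑u) = ↑u') :
    tauMap σ (↑u⁻¹) = ↑u'⁻¹ := by
  have : tauMap σ (↑u⁻¹ : Unitization F A) * (↑u' : Unitization F A) = 1 := by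
    rw [← h, ← tauMap_mul σ hanti, Units.mul_inv, tauMap_one]
  exact Units.eq_inv_of_mul_eq_one_right this

lemma inr_snd_of_fst_eq_zero {b : Unitization F A} (h : b.fst = 0) :
    ((b.snd : A) : Unitization F A) = b :=
  Unitization.ext (by simp [h]) (by simp)

end Aux

noncomputable def cayleyFwd {F : Type*} [Field F] {A : Type*} [NonUnitalRing A] [Module F A]
    [IsScalarTower F A A] [SMulCommClass F A A] (x : A) : A :=
  ((x : Unitization F A) * Ring.inverse (2 + (x : Unitization F A))).snd

noncomputable def cayleyBwd {F : Type*} [Field F] {A : Type*} [NonUnitalRing A] [Module F A]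
    [IsScalarTower F A A] [SMulCommClass F A A] (a : A) : A :=
  ((2 : Unitization F A) * (a : Unitization F A) * Ring.inverse (1 - (a : Unitization F A))).snd

section Main

variable {F : Type*} [Field F] {A : Type*} [NonUnitalRing A] [Module F A]
  [IsScalarTower F A A] [SMulCommClass F A A]

lemma isUnit_two_unitization (hchar : ringChar F ≠ 2) :
    IsUnit (2 : Unitization F A) := by
  have h2 : (2 : F) ≠ 0 := Ring.two_ne_zero hchar
  have : IsUnit (2 : F) := isUnit_iff_ne_zero.mpr h2
  have := this.map (algebraMap F (Unitization F A))
  rwa [map_ofNat] at this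

lemma isUnit_two_add (hchar : ringChar F ≠ 2) {n : Unitization F A} (hn : IsNilpotent n) :
    IsUnit ((2 : Unitization F A) + n) := by
  have := hn.isUnit_add_right_of_commute (isUnit_two_unitization hchar) (Commute.ofNat_right n 2)
  rwa [add_comm] at this

end Main

section Core

variable {F : Type*} [Field F] {A : Type*} [NonUnitalRing A] [Module F A]
  [IsScalarTower F A A] [SMulCommClass F A A]

lemma rel2_of_rel1 {R : Type*} [Ring R] {ξ η : R} (hξ : IsNilpotent ξ)
    (h : ξ + η + ξ * η = 0) : η + ξ + η * ξ = 0 := by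
  obtain ⟨u, hu⟩ := hξ.isUnit_one_add
  have h1 : (1 + ξ) * (1 + η) = 1 := by
    have e : (1 + ξ) * (1 + η) = 1 + (ξ + η + ξ * η) := by noncomm_ring
    rw [e, h, add_zero]
  have h2 : (1 + η) * (1 + ξ) = 1 := by
    rw [← hu] at h1 ⊢
    rw [← Units.inv_eq_of_mul_eq_one_right h1, Units.inv_mul]
  have e2 : η + ξ + η * ξ = (1 + η) * (1 + ξ) - 1 := by noncomm_ring
  rw [e2, h2, sub_self]

variable (σ : A →ₗ[F] A)

lemma cayleyFwd_inr (x : A) :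
    ((cayleyFwd (F := F) x : A) : Unitization F A)
      = (x : Unitization F A) * Ring.inverse (2 + (x : Unitization F A)) := by
  apply inr_snd_of_fst_eq_zero
  simp [Unitization.fst_mul]

lemma cayleyBwd_inr (a : A) :
    ((cayleyBwd (F := F) a : A) : Unitization F A)
      = (2 : Unitization F A) * (a : Unitization F A)
          * Ring.inverse (1 - (a : Unitization F A)) := by
  apply inr_snd_of_fst_eq_zero
  simp [Unitization.fst_mul]

lemma fwd_skew (hchar : ringChar F ≠ 2)
    (hnilx : IsNilpotent ((x : A) : Unitization F A))
    (hnilsx : IsNilpotent ((σ x : A) : Unitization F A))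
    (hanti : ∀ x y : A, σ (x * y) = σ y * σ x)
    (hx : x + σ x + x * σ x = 0) :
    σ (cayleyFwd (F := F) x) = -(cayleyFwd (F := F) x) := by
  set B := Unitization F A
  set ξ : B := (x : B) with hξdef
  set η : B := ((σ x : A) : B) with hηdef
  obtain ⟨v, hv⟩ := isUnit_two_add hchar hnilx
  obtain ⟨vt, hvt⟩ := isUnit_two_add hchar hnilsx
  have hinr : ((cayleyFwd (F := F) x : A) : B) = ξ * ↑v⁻¹ := by
    rw [cayleyFwd_inr, ← hv, Ring.inverse_unit]
  have htv : tauMap σ (↑v : B) = ↑vt := by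
    rw [hv, hvt, tauMap_add, tauMap_two, tauMap_inr]
  have htvi : tauMap σ (↑v⁻¹ : B) = ↑vt⁻¹ := tauMap_coe_inv σ hanti v vt htv
  have rel1 : ξ + η + ξ * η = 0 := by
    have h0 := congrArg (fun a : A => (a : B)) hx
    simpa [Unitization.inr_add, Unitization.inr_mul, Unitization.inr_zero] using h0
  have rel2 : η + ξ + η * ξ = 0 := rel2_of_rel1 hnilx rel1
  have key : tauMap σ (ξ * ↑v⁻¹) = -(ξ * ↑v⁻¹) := by
    rw [tauMap_mul σ hanti, htvi, hξdef, tauMap_inr, ← hηdef]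
    rw [← Units.mul_right_inj vt, ← Units.mul_left_inj v]
    have lhs : (↑vt : B) * (↑vt⁻¹ * η) * ↑v = η * ↑v := by
      rw [Units.mul_inv_cancel_left]
    have rhs : (↑vt : B) * -(ξ * ↑v⁻¹) * ↑v = -((↑vt : B) * ξ) := by
      rw [mul_neg, neg_mul, mul_assoc, mul_assoc, Units.inv_mul, mul_one]
    rw [lhs, rhs, hv, hvt]
    have e : η * (2 + ξ) + (2 + η) * ξ = 2 * (η + ξ + η * ξ) := by noncomm_ring
    rw [rel2, mul_zero] at e
    exact eq_neg_of_add_eq_zero_left e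
  apply Unitization.inr_injective (R := F)
  rw [Unitization.inr_neg, ← tauMap_inr (σ := σ), hinr, key]

lemma bwd_mem (hchar : ringChar F ≠ 2) {a : A}
    (hnila : IsNilpotent ((a : A) : Unitization F A))
    (hanti : ∀ x y : A, σ (x * y) = σ y * σ x)
    (ha : σ a = -a) :
    cayleyBwd (F := F) a + σ (cayleyBwd (F := F) a)
      + cayleyBwd (F := F) a * σ (cayleyBwd (F := F) a) = 0 := by
  set B := Unitization F A
  set α : B := (a : B) with hαdef
  obtain ⟨w, hw⟩ := hnila.isUnit_one_sub
  obtain ⟨u2, hu2⟩ := hnila.isUnit_one_add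
  have hm : ((cayleyBwd (F := F) a : A) : B) = 2 * α * ↑w⁻¹ := by
    rw [cayleyBwd_inr, ← hw, Ring.inverse_unit]
  set m : B := 2 * α * ↑w⁻¹ with hmdef
  have htw : tauMap σ (↑w : B) = ↑u2 := by
    rw [hw, hu2, sub_eq_add_neg, tauMap_add, tauMap_one, tauMap_neg, hαdef, tauMap_inr, ha,
      Unitization.inr_neg, neg_neg, add_comm]
  have htwi : tauMap σ (↑w⁻¹ : B) = ↑u2⁻¹ := tauMap_coe_inv σ hanti w u2 htw
  have htm : tauMap σ m = ↑u2⁻¹ * (-α * 2) := by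
    rw [hmdef, tauMap_mul σ hanti, htwi, tauMap_mul σ hanti, tauMap_two, hαdef, tauMap_inr, ha,
      Unitization.inr_neg]
  have h1 : (1 : B) + m = ↑u2 * ↑w⁻¹ := by
    rw [← Units.mul_left_inj w]
    rw [add_mul, one_mul, hmdef, mul_assoc, mul_assoc, Units.inv_mul, mul_one, mul_assoc,
      Units.inv_mul, mul_one, hw, hu2]
    noncomm_ring
  have h2 : (1 : B) + ↑u2⁻¹ * (-α * 2) = ↑u2⁻¹ * ↑w := by
    rw [← Units.mul_right_inj u2]
    rw [mul_add, mul_one, Units.mul_inv_cancel_left, Units.mul_inv_cancel_left, hw, hu2]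
    noncomm_ring
  have hcomm : Commute u2 w := by
    apply Units.ext
    show (↑u2 : B) * ↑w = ↑w * ↑u2
    rw [hw, hu2]; noncomm_ring
  have h3 : ((↑u2 : B) * ↑w⁻¹) * (↑u2⁻¹ * ↑w) = 1 := by
    have hu : u2 * w⁻¹ * (u2⁻¹ * w) = 1 := by
      rw [(hcomm.inv_right).eq]
      group
    calc ((↑u2 : B) * ↑w⁻¹) * (↑u2⁻¹ * ↑w) = ↑(u2 * w⁻¹ * (u2⁻¹ * w)) := by
          simp [Units.val_mul]
      _ = 1 := by rw [hu, Units.val_one]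
  have hBid : m + tauMap σ m + m * tauMap σ m = 0 := by
    have e : m + tauMap σ m + m * tauMap σ m = (1 + m) * (1 + tauMap σ m) - 1 := by noncomm_ring
    rw [e, htm, h1, h2, h3, sub_self]
  apply Unitization.inr_injective (R := F)
  rw [Unitization.inr_add, Unitization.inr_add, Unitization.inr_mul, Unitization.inr_zero]
  rw [← tauMap_inr (σ := σ), hm]
  exact hBid

lemma bwd_fwd (hchar : ringChar F ≠ 2) {x : A}
    (hnilx : IsNilpotent ((x : A) : Unitization F A)) :
    cayleyBwd (F := F) (cayleyFwd (F := F) x) = x := by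
  set B := Unitization F A
  set ξ : B := (x : B) with hξdef
  obtain ⟨v, hv⟩ := isUnit_two_add hchar hnilx
  obtain ⟨t, ht⟩ := isUnit_two_unitization (A := A) hchar
  have ha' : ((cayleyFwd (F := F) x : A) : B) = ξ * ↑v⁻¹ := by
    rw [cayleyFwd_inr, ← hv, Ring.inverse_unit]
  have hw' : (1 : B) - ξ * ↑v⁻¹ = ↑(t * v⁻¹) := by
    rw [← Units.mul_left_inj v]
    simp only [sub_mul, one_mul, Units.val_mul, mul_assoc, Units.inv_mul, mul_one]
    rw [hv, ht]
    noncomm_ring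
  have hBid : (2 : B) * ((cayleyFwd (F := F) x : A) : B)
      * Ring.inverse (1 - ((cayleyFwd (F := F) x : A) : B)) = ξ := by
    rw [ha', hw', Ring.inverse_unit, mul_inv_rev, inv_inv, Units.val_mul]
    rw [← Units.mul_left_inj t]
    simp only [mul_assoc, Units.inv_mul_cancel_left, Units.inv_mul, mul_one]
    rw [ht]
    noncomm_ring
  apply Unitization.inr_injective (R := F)
  rw [cayleyBwd_inr, hBid]

lemma fwd_bwd (hchar : ringChar F ≠ 2) {a : A}
    (hnila : IsNilpotent ((a : A) : Unitization F A)) :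
    cayleyFwd (F := F) (cayleyBwd (F := F) a) = a := by
  set B := Unitization F A
  set α : B := (a : B) with hαdef
  obtain ⟨w, hw⟩ := hnila.isUnit_one_sub
  obtain ⟨t, ht⟩ := isUnit_two_unitization (A := A) hchar
  have hm : ((cayleyBwd (F := F) a : A) : B) = 2 * α * ↑w⁻¹ := by
    rw [cayleyBwd_inr, ← hw, Ring.inverse_unit]
  have hs' : (2 : B) + 2 * α * ↑w⁻¹ = ↑(t * w⁻¹) := by
    rw [← Units.mul_left_inj w]
    simp only [add_mul, Units.val_mul, mul_assoc, Units.inv_mul, mul_one]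
    rw [hw, ht]
    noncomm_ring
    simp
  have hBid : ((cayleyBwd (F := F) a : A) : B)
      * Ring.inverse (2 + ((cayleyBwd (F := F) a : A) : B)) = α := by
    rw [hm, hs', Ring.inverse_unit, mul_inv_rev, inv_inv, Units.val_mul]
    rw [← Units.mul_left_inj t]
    simp only [mul_assoc, Units.inv_mul_cancel_left, Units.inv_mul, mul_one]
    rw [ht]
    noncomm_ring
  apply Unitization.inr_injective (R := F)
  rw [cayleyFwd_inr, hBid]

end Core

/-- Let `A` be a finite-dimensional associative nilpotent algebra over a finite field `F`
of odd characteristic and `σ` an `F`-linear anti-involution of `A`.  Then the generalized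
unipotent symplectic group `Sp(A,σ) = {x ∈ A : x + σ(x) + x·σ(x) = 0}` has cardinality
`q^d`, where `q = |F|` and `d = dim_F {a ∈ A : σ(a) = -a}`. -/
theorem card_generalized_unipotent_symplectic_group
    (F : Type*) [Field F] [Fintype F] (hchar : ringChar F ≠ 2)
    (A : Type*) [NonUnitalRing A] [Module F A]
    [IsScalarTower F A A] [SMulCommClass F A A] [FiniteDimensional F A]
    (hnil : ∀ a : A, ∃ k : ℕ, nupow a k = 0)
    (σ : A →ₗ[F] A)
    (hanti : ∀ x y : A, σ (x * y) = σ y * σ x)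
    (hinvol : ∀ x : A, σ (σ x) = x) :
    Nat.card ↥{x : A | x + σ x + x * σ x = 0} =
      Fintype.card F ^
        Module.finrank F ↥(LinearMap.ker (σ + (LinearMap.id : A →ₗ[F] A))) := by
  classical
  have hfinA : Finite A := Module.finite_of_finite F
  set K := LinearMap.ker (σ + (LinearMap.id : A →ₗ[F] A)) with hK
  have memK : ∀ a : A, a ∈ K ↔ σ a = -a := by
    intro a
    rw [hK, LinearMap.mem_ker, LinearMap.add_apply, LinearMap.id_apply]
    constructor
    · intro h; exact eq_neg_of_add_eq_zero_left h
    · intro h; rw [h]; exact neg_add_cancel a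
  let fwdF : ↥{x : A | x + σ x + x * σ x = 0} → ↥K := fun p =>
    ⟨cayleyFwd (F := F) p.1, by
      rw [memK]
      exact fwd_skew σ hchar (isNilpotent_inr (hnil p.1)) (isNilpotent_inr (hnil (σ p.1)))
        hanti p.2⟩
  let bwdF : ↥K → ↥{x : A | x + σ x + x * σ x = 0} := fun p =>
    ⟨cayleyBwd (F := F) p.1, by
      have ha : σ p.1 = -p.1 := (memK p.1).mp p.2
      exact bwd_mem σ hchar (isNilpotent_inr (hnil p.1)) hanti ha⟩
  have hlr : Function.LeftInverse bwdF fwdF := fun p =>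
    Subtype.ext (bwd_fwd hchar (isNilpotent_inr (hnil p.1)))
  have hrl : Function.RightInverse bwdF fwdF := fun p =>
    Subtype.ext (fwd_bwd hchar (isNilpotent_inr (hnil p.1)))
  have e : ↥{x : A | x + σ x + x * σ x = 0} ≃ ↥K := ⟨fwdF, bwdF, hlr, hrl⟩
  rw [Nat.card_congr e]
  have : Fintype ↥K := Fintype.ofFinite _
  rw [Nat.card_eq_fintype_card]
  exact Module.card_eq_pow_finrank (K := F)
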